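/- Let k ≥ 2 be an integer and let s: ℝ → ℝ be a smooth, π/k-periodic function with 𝔯(θ) := s''(θ) + s(θ) > 0 for all θ and enclosed area (1/2)∫₀^{2π} s(θ)·𝔯(θ) dθ = π. Then the mean value of s satisfies (1/(2π))∫₀^{2π} s(θ) dθ ≤ √(c_k), where c_k := (2k/π)·tan(π/(2k)). -/

import Mathlib

/-!
Let `x(θ) = s θ • (cos θ, sin θ) + s' θ • (-sin θ, cos θ)` be the boundary point with outer
normal `θ`. Its component along the direction `c` has derivative `-𝔯(θ) sin (θ - c)`, so it is
at most `s c` while `|θ - c| ≤ π`. Combining this for both endpoints of an arc `[a, b]` of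
length less than `π` gives sine-convexity, `s θ sin (b - a) ≤ s a sin (b - θ) + s b sin (θ - a)`,
and integrating it over an arc of length `π / k`, at whose ends `s` takes the same value, gives
`∫₀^{2π} s ≤ 4k tan (π/(2k)) · min s`. Since `∫₀^{2π} 𝔯 = ∫₀^{2π} s` by periodicity,
`2π = ∫ s 𝔯 ≥ min s · ∫ s ≥ (∫ s)² / (4k tan (π/(2k)))`.
-/

open Real Set Filter MeasureTheory

noncomputable section

/-- Radius of curvature of the curve with support function `f`: `𝔯[f] = f'' + f`. -/
def rad (f : ℝ → ℝ) (θ : ℝ) : ℝ := iteratedDeriv 2 f θ + f θ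

section SupportFunction

variable {f : ℝ → ℝ}

theorem rad_eq_deriv_deriv_add (f : ℝ → ℝ) (θ : ℝ) : rad f θ = deriv (deriv f) θ + f θ := by
  simp [rad, iteratedDeriv_succ]

theorem continuous_rad (hf : ContDiff ℝ 2 f) : Continuous (rad f) := by
  rw [funext (rad_eq_deriv_deriv_add f)]
  exact (hf.deriv' (n := 1)).continuous_deriv le_rfl |>.add hf.continuous

/-- The component along the direction `(cos c, sin c)` of the boundary point
`f θ • (cos θ, sin θ) + f' θ • (-sin θ, cos θ)` with outer normal `θ`. -/
def supportProj (f : ℝ → ℝ) (c θ : ℝ) : ℝ := f θ * cos (θ - c) - deriv f θ * sin (θ - c)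

theorem supportProj_self (f : ℝ → ℝ) (c : ℝ) : supportProj f c c = f c := by
  simp [supportProj]

theorem hasDerivAt_supportProj (hf : ContDiff ℝ 2 f) (c x : ℝ) :
    HasDerivAt (supportProj f c) (-(rad f x * sin (x - c))) x := by
  have hcos : HasDerivAt (fun θ => cos (θ - c)) (-sin (x - c)) x := by
    simpa [Function.comp_def] using (hasDerivAt_cos (x - c)).comp x ((hasDerivAt_id x).sub_const c)
  have hsin : HasDerivAt (fun θ => sin (θ - c)) (cos (x - c)) x := by
    simpa [Function.comp_def] using (hasDerivAt_sin (x - c)).comp x ((hasDerivAt_id x).sub_const c)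
  have h₁ := (hf.differentiable two_ne_zero x).hasDerivAt
  have h₂ := (hf.differentiable_deriv_two x).hasDerivAt
  refine ((h₁.mul hcos).sub (h₂.mul hsin)).congr_deriv ?_
  rw [rad_eq_deriv_deriv_add]
  ring

theorem supportProj_le (hf : ContDiff ℝ 2 f) (hr : ∀ θ, 0 ≤ rad f θ) {c θ : ℝ}
    (hθ : |θ - c| ≤ π) : supportProj f c θ ≤ f c := by
  have hcont : Continuous (supportProj f c) :=
    continuous_iff_continuousAt.2 fun x => (hasDerivAt_supportProj hf c x).continuousAt
  rw [← supportProj_self f c]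
  rcases abs_le.1 hθ with ⟨hlo, hhi⟩
  rcases le_total θ c with hθc | hcθ
  · refine monotoneOn_of_hasDerivWithinAt_nonneg (convex_Icc (c - π) c) hcont.continuousOn
      (fun x _ => (hasDerivAt_supportProj hf c x).hasDerivWithinAt) (fun x hx => ?_)
      ⟨by linarith, hθc⟩ ⟨by linarith [pi_pos], le_rfl⟩ hθc
    rw [interior_Icc] at hx
    have : sin (x - c) ≤ 0 :=
      sin_nonpos_of_nonpos_of_neg_pi_le (by linarith [hx.2]) (by linarith [hx.1])
    nlinarith [hr x]
  · refine antitoneOn_of_hasDerivWithinAt_nonpos (convex_Icc c (c + π)) hcont.continuousOn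
      (fun x _ => (hasDerivAt_supportProj hf c x).hasDerivWithinAt) (fun x hx => ?_)
      ⟨le_rfl, by linarith [pi_pos]⟩ ⟨hcθ, by linarith⟩ hcθ
    rw [interior_Icc] at hx
    have : 0 ≤ sin (x - c) :=
      sin_nonneg_of_nonneg_of_le_pi (by linarith [hx.1]) (by linarith [hx.2])
    nlinarith [hr x]

theorem mul_sin_sub_eq (f : ℝ → ℝ) (a b θ : ℝ) :
    f θ * sin (b - a) = sin (b - θ) * supportProj f a θ + sin (θ - a) * supportProj f b θ := by
  simp only [supportProj, sin_sub, cos_sub]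
  linear_combination (-(f θ * (sin b * cos a - cos b * sin a))) * sin_sq_add_cos_sq θ

theorem mul_sin_sub_le (hf : ContDiff ℝ 2 f) (hr : ∀ θ, 0 ≤ rad f θ) {a b θ : ℝ}
    (haθ : a ≤ θ) (hθb : θ ≤ b) (hba : b ≤ a + π) :
    f θ * sin (b - a) ≤ f a * sin (b - θ) + f b * sin (θ - a) := by
  have h₁ : 0 ≤ sin (b - θ) := sin_nonneg_of_nonneg_of_le_pi (by linarith) (by linarith)
  have h₂ : 0 ≤ sin (θ - a) := sin_nonneg_of_nonneg_of_le_pi (by linarith) (by linarith)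
  have ha := supportProj_le hf hr (c := a) (θ := θ) (abs_le.2 ⟨by linarith [pi_pos], by linarith⟩)
  have hb := supportProj_le hf hr (c := b) (θ := θ) (abs_le.2 ⟨by linarith, by linarith [pi_pos]⟩)
  rw [mul_sin_sub_eq f a b θ]
  nlinarith [mul_le_mul_of_nonneg_left ha h₁, mul_le_mul_of_nonneg_left hb h₂]

theorem integral_mul_sin_le (hf : ContDiff ℝ 2 f) (hr : ∀ θ, 0 ≤ rad f θ) (a : ℝ) {δ : ℝ}
    (hδ₀ : 0 ≤ δ) (hδπ : δ ≤ π) :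
    (∫ θ in a..a + δ, f θ) * sin δ ≤ (f a + f (a + δ)) * (1 - cos δ) := by
  have hsin_right : ∫ θ in a..a + δ, sin (θ - a) = 1 - cos δ := by
    simp [intervalIntegral.integral_comp_sub_right (fun x => sin x) a, integral_sin]
  have hsin_left : ∫ θ in a..a + δ, sin (a + δ - θ) = 1 - cos δ := by
    simp [intervalIntegral.integral_comp_sub_left (fun x => sin x) (a + δ), integral_sin]
  calc (∫ θ in a..a + δ, f θ) * sin δ
      = ∫ θ in a..a + δ, f θ * sin (a + δ - a) := by simp [intervalIntegral.integral_mul_const]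
    _ ≤ ∫ θ in a..a + δ, (f a * sin (a + δ - θ) + f (a + δ) * sin (θ - a)) := by
        refine intervalIntegral.integral_mono_on (by linarith) ?_ ?_ fun θ hθ =>
          mul_sin_sub_le hf hr hθ.1 hθ.2 (by linarith)
        · exact (hf.continuous.mul continuous_const).intervalIntegrable _ _
        · exact Continuous.intervalIntegrable (by fun_prop) _ _
    _ = (f a + f (a + δ)) * (1 - cos δ) := by
        rw [intervalIntegral.integral_add (Continuous.intervalIntegrable (by fun_prop) _ _)
          (Continuous.intervalIntegrable (by fun_prop) _ _), intervalIntegral.integral_const_mul,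
          intervalIntegral.integral_const_mul, hsin_left, hsin_right]
        ring

theorem one_sub_cos_eq_tan_half_mul_sin {x : ℝ} (hx : cos (x / 2) ≠ 0) :
    1 - cos x = tan (x / 2) * sin x := by
  conv_lhs => rw [← mul_div_cancel₀ x (two_ne_zero' ℝ), cos_two_mul]
  conv_rhs => rw [← mul_div_cancel₀ x (two_ne_zero' ℝ), sin_two_mul, tan_eq_sin_div_cos]
  field_simp
  linear_combination (-2 : ℝ) * sin_sq_add_cos_sq (x / 2)

theorem integral_le_mul_tan_half (hf : ContDiff ℝ 2 f) (hr : ∀ θ, 0 ≤ rad f θ) (a : ℝ) {δ : ℝ}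
    (hδ₀ : 0 < δ) (hδπ : δ < π) :
    ∫ θ in a..a + δ, f θ ≤ (f a + f (a + δ)) * tan (δ / 2) := by
  have hcos : cos (δ / 2) ≠ 0 := (cos_pos_of_mem_Ioo ⟨by linarith, by linarith⟩).ne'
  have hsin : 0 < sin δ := sin_pos_of_pos_of_lt_pi hδ₀ hδπ
  refine le_of_mul_le_mul_right ?_ hsin
  calc (∫ θ in a..a + δ, f θ) * sin δ ≤ (f a + f (a + δ)) * (1 - cos δ) :=
        integral_mul_sin_le hf hr a hδ₀.le hδπ.le
    _ = (f a + f (a + δ)) * tan (δ / 2) * sin δ := by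
        rw [one_sub_cos_eq_tan_half_mul_sin hcos, mul_assoc]

theorem integral_zero_two_pi_le_of_periodic (hf : ContDiff ℝ 2 f) (hr : ∀ θ, 0 ≤ rad f θ)
    {k : ℕ} (hk : 2 ≤ k) (hper : Function.Periodic f (π / k)) (a : ℝ) :
    ∫ θ in (0 : ℝ)..2 * π, f θ ≤ 4 * k * tan (π / (2 * k)) * f a := by
  have hk' : (2 : ℝ) ≤ k := by exact_mod_cast hk
  have hδ₀ : 0 < π / k := by positivity
  have hδπ : π / k < π := div_lt_self pi_pos (by linarith)
  have hsplit : ∫ θ in (0 : ℝ)..2 * π, f θ = 2 * k * ∫ θ in a..a + π / k, f θ := by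
    have h := hper.intervalIntegral_add_zsmul_eq (2 * k : ℕ) 0
      fun _ _ => hf.continuous.intervalIntegrable _ _
    have h2π : ((2 * k : ℕ) : ℤ) • (π / k) = 2 * π := by
      rw [zsmul_eq_mul]
      push_cast
      field_simp
    rw [hper.intervalIntegral_add_eq 0 a, zero_add, h2π, zsmul_eq_mul] at h
    rw [h]
    push_cast
    ring
  calc ∫ θ in (0 : ℝ)..2 * π, f θ = 2 * k * ∫ θ in a..a + π / k, f θ := hsplit
    _ ≤ 2 * k * ((f a + f (a + π / k)) * tan (π / k / 2)) := by
        gcongr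
        exact integral_le_mul_tan_half hf hr a hδ₀ hδπ
    _ = 4 * k * tan (π / (2 * k)) * f a := by
        rw [hper a, div_div, mul_comm (k : ℝ) 2]
        ring

theorem integral_rad_eq_integral_of_periodic (hf : ContDiff ℝ 2 f) {T : ℝ}
    (hper : Function.Periodic f T) (a : ℝ) :
    ∫ θ in a..a + T, rad f θ = ∫ θ in a..a + T, f θ := by
  have hper' : Function.Periodic (deriv f) T := fun x => by
    rw [← deriv_comp_add_const, funext hper]
  have hcont₂ : Continuous (deriv (deriv f)) := (hf.deriv' (n := 1)).continuous_deriv le_rfl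
  simp only [rad_eq_deriv_deriv_add]
  rw [intervalIntegral.integral_add (hcont₂.intervalIntegrable _ _)
    (hf.continuous.intervalIntegrable _ _),
    intervalIntegral.integral_deriv_eq_sub (fun x _ => hf.differentiable_deriv_two x)
      (hcont₂.intervalIntegrable _ _), hper' a, sub_self, zero_add]

end SupportFunction

theorem mean_support_function_bound
    (k : ℕ) (hk : 2 ≤ k) (s : ℝ → ℝ) (hsmooth : ContDiff ℝ (⊤ : ℕ∞) s)
    (hper : Function.Periodic s (π / k))
    (hconv : ∀ θ, 0 < rad s θ)
    (harea : (1 / 2) * ∫ θ in (0:ℝ)..(2 * π), s θ * rad s θ = π)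
    (ck : ℝ) (hck : ck = (2 * k / π) * Real.tan (π / (2 * k))) :
    (1 / (2 * π)) * ∫ θ in (0:ℝ)..(2 * π), s θ ≤ Real.sqrt ck := by
  have hs : ContDiff ℝ 2 s := hsmooth.of_le (WithTop.coe_le_coe.mpr le_top)
  have hr : ∀ θ, 0 ≤ rad s θ := fun θ => (hconv θ).le
  have hk' : (2 : ℝ) ≤ k := by exact_mod_cast hk
  set L := ∫ θ in (0:ℝ)..(2 * π), s θ
  set t := tan (π / (2 * k))
  have ht : 0 < t := tan_pos_of_pos_of_lt_pi_div_two (by positivity)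
    (by rw [div_lt_div_iff₀ (by positivity) two_pos]; nlinarith [pi_pos])
  have hmin : ∀ θ, L / (4 * k * t) ≤ s θ := fun θ => by
    rw [div_le_iff₀ (by positivity), mul_comm (s θ)]
    exact integral_zero_two_pi_le_of_periodic hs hr hk hper θ
  have h2π : Function.Periodic s (2 * π) := by
    simpa [mul_div_cancel₀ π (by positivity : (k : ℝ) ≠ 0), mul_assoc] using hper.nat_mul (2 * k)
  have hL : L / (4 * k * t) * L ≤ 2 * π := calc
    L / (4 * k * t) * L = ∫ θ in (0:ℝ)..(2 * π), L / (4 * k * t) * rad s θ := by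
        rw [intervalIntegral.integral_const_mul, ← zero_add (2 * π),
          integral_rad_eq_integral_of_periodic hs h2π, zero_add]
    _ ≤ ∫ θ in (0:ℝ)..(2 * π), s θ * rad s θ :=
        intervalIntegral.integral_mono_on (by positivity)
          ((continuous_const.mul (continuous_rad hs)).intervalIntegrable _ _)
          ((hs.continuous.mul (continuous_rad hs)).intervalIntegrable _ _)
          fun θ _ => mul_le_mul_of_nonneg_right (hmin θ) (hr θ)
    _ = 2 * π := by linarith
  have hL₂ : L ^ 2 ≤ 8 * π * k * t := by
    rw [div_mul_eq_mul_div, div_le_iff₀ (by positivity)] at hL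
    nlinarith
  apply le_sqrt_of_sq_le
  calc (1 / (2 * π) * L) ^ 2 = L ^ 2 / (4 * π ^ 2) := by ring
    _ ≤ 8 * π * k * t / (4 * π ^ 2) := by gcongr
    _ = ck := by rw [hck]; field_simp; ring

end
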